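/- arXiv:2604.13830 — 2 statements merged into one kernel-verified Lean document; each statement's English description precedes it below -/
import Mathlib

section
/- Let b > 0 and let Ψ, Ψ* : ℝ × ℝ → ℝ be continuous on [−b,b] × [−1,1] with continuous partial derivatives ∂ₓΨ and ∂ₓΨ* on [−b,b] × [−1,1], and assume their inflow traces coincide: Ψ(b,μ) = Ψ*(b,μ) for all μ ∈ [−1,0] and Ψ(−b,μ) = Ψ*(−b,μ) for all μ ∈ [0,1]. Let Σ_t : ℝ → ℝ be continuous on [−b,b] with 0 < σ_* ≤ Σ_t(x) ≤ σ* for all x ∈ [−b,b], and let f : ℝ × ℝ → ℝ be continuous on [−b,b] × [−1,1] with μ ∂ₓΨ*(x,μ) + Σ_t(x)Ψ*(x,μ) = f(x,μ) on [−b,b] × [−1,1]. Then (∫_{−1}^{1} ∫_{−b}^{b} ((Ψ*−Ψ)(x,μ)² + (μ ∂ₓ(Ψ*−Ψ)(x,μ))²) dx dμ)^{1/2} ≤ C_gr (∫_{−1}^{1} ∫_{−b}^{b} (μ ∂ₓΨ(x,μ) + Σ_t(x)Ψ(x,μ) − f(x,μ))² dx dμ)^{1/2}, where C_gr = (σ_*⁻²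 + (1 + σ*/σ_*)²)^{1/2}. -/
/-!
Fix a direction `μ` and let `e = Ψ* - Ψ`, so that `μ e' + Σ_t e + r = 0` with `r` the residual
of `Ψ`, and `e` vanishes on the inflow boundary. Multiplying by `e` and integrating in `x` gives
`∫ Σ_t e² + ∫ r e = -μ (e(b)² - e(-b)²) / 2 ≤ 0`, whence `‖e‖ ≤ ‖r‖ / σ_*`; the equation itself
then gives `‖μ e'‖ ≤ ‖r‖ + σ* ‖e‖ ≤ (1 + σ*/σ_*) ‖r‖`. Both estimates are obtained by
integrating pointwise Young inequalities, and integrating the per-direction bound over `μ`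
gives the theorem.
-/

open Set MeasureTheory intervalIntegral
open scoped Interval

theorem intervalIntegral.integral_mono_on_of_nonneg {μ : Measure ℝ} {f g : ℝ → ℝ} {a b : ℝ}
    (hab : a ≤ b) (hf : ∀ x ∈ Icc a b, 0 ≤ f x) (hg : IntervalIntegrable g μ a b)
    (h : ∀ x ∈ Icc a b, f x ≤ g x) : ∫ x in a..b, f x ∂μ ≤ ∫ x in a..b, g x ∂μ := by
  rw [integral_of_le hab, integral_of_le hab]
  refine integral_mono_of_nonneg ?_ hg.1 ?_ <;>
    filter_upwards [ae_restrict_mem measurableSet_Ioc] with x hx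
  exacts [hf x (Ioc_subset_Icc_self hx), h x (Ioc_subset_Icc_self hx)]

theorem continuousOn_intervalIntegral_of_continuousOn_prod {X E : Type*} [TopologicalSpace X]
    [FirstCountableTopology X] [NormedAddCommGroup E] [NormedSpace ℝ E]
    {F : ℝ → X → E} {a b : ℝ} {K : Set X} (hK : IsCompact K)
    (hF : ContinuousOn (Function.uncurry F) ([[a, b]] ×ˢ K)) :
    ContinuousOn (fun y => ∫ x in a..b, F x y) K := by
  obtain ⟨C, hC⟩ := (isCompact_uIcc.prod hK).exists_bound_of_continuousOn hF
  intro y₀ hy₀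
  refine continuousWithinAt_of_dominated_interval (bound := fun _ => C) ?_ ?_
    intervalIntegrable_const ?_
  · filter_upwards [self_mem_nhdsWithin] with y hy
    exact ((hF.uncurry_right y hy).mono uIoc_subset_uIcc).aestronglyMeasurable
      measurableSet_uIoc
  · filter_upwards [self_mem_nhdsWithin] with y hy
    exact ae_of_all _ fun x hx => hC (x, y) ⟨uIoc_subset_uIcc hx, hy⟩
  · exact ae_of_all _ fun x hx => hF.uncurry_left x (uIoc_subset_uIcc hx) y₀ hy₀

theorem add_sq_le_of_pos {t : ℝ} (ht : 0 < t) (u v : ℝ) :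
    (u + v) ^ 2 ≤ (1 + t) * u ^ 2 + (1 + t⁻¹) * v ^ 2 := by
  have hexpand : t⁻¹ * (t * u - v) ^ 2 = t * u ^ 2 - 2 * u * v + t⁻¹ * v ^ 2 := by
    field_simp
    ring
  nlinarith [show 0 ≤ t⁻¹ * (t * u - v) ^ 2 by positivity]

theorem integral_mul_deriv_self {φ φ' : ℝ → ℝ} {a b : ℝ}
    (hφ : ∀ x ∈ [[a, b]], HasDerivWithinAt φ (φ' x) [[a, b]] x)
    (hφ' : IntervalIntegrable φ' volume a b) :
    ∫ x in a..b, φ x * φ' x = (φ b ^ 2 - φ a ^ 2) / 2 := by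
  have h := integral_deriv_mul_eq_sub_of_hasDerivWithinAt hφ hφ hφ' hφ'
  simp only [mul_comm (φ' _), ← two_mul, intervalIntegral.integral_const_mul] at h
  linarith

section Transport

variable {a c μ σmin σmax : ℝ} {φ φ' r σ : ℝ → ℝ}

theorem inflow_term_nonneg (hleft : 0 ≤ μ → φ a = 0) (hright : μ ≤ 0 → φ c = 0) :
    0 ≤ μ * (φ c ^ 2 - φ a ^ 2) := by
  rcases le_total μ 0 with hμ | hμ
  · rw [hright hμ]
    nlinarith [sq_nonneg (φ a)]
  · rw [hleft hμ]
    nlinarith [sq_nonneg (φ c)]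

theorem integral_sq_le_of_transport (hac : a ≤ c) (hσmin : 0 < σmin)
    (hφ : ∀ x ∈ Icc a c, HasDerivWithinAt φ (φ' x) (Icc a c) x)
    (hφ' : ContinuousOn φ' (Icc a c)) (hr : ContinuousOn r (Icc a c))
    (hleft : 0 ≤ μ → φ a = 0) (hright : μ ≤ 0 → φ c = 0)
    (htransport : ∀ x ∈ Icc a c, μ * φ' x + σ x * φ x + r x = 0)
    (hσ : ∀ x ∈ Icc a c, σmin ≤ σ x) :
    ∫ x in a..c, φ x ^ 2 ≤ σmin⁻¹ ^ 2 * ∫ x in a..c, r x ^ 2 := by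
  have hφc : ContinuousOn φ (Icc a c) := fun x hx => (hφ x hx).continuousWithinAt
  have hpointwise : ∀ x ∈ Icc a c,
      σmin * φ x ^ 2 - r x ^ 2 / σmin ≤ -(2 * μ) * (φ x * φ' x) := by
    intro x hx
    have hflux : -(2 * μ) * (φ x * φ' x) = 2 * σ x * φ x ^ 2 + 2 * φ x * r x := by
      linear_combination (-2 * φ x) * htransport x hx
    have hsq : (σmin * φ x + r x) ^ 2 / σmin = σmin * φ x ^ 2 + 2 * φ x * r x + r x ^ 2 / σmin := by
      field_simp
      ring
    have : 0 ≤ (σmin * φ x + r x) ^ 2 / σmin := by positivity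
    nlinarith [mul_nonneg (sub_nonneg.2 (hσ x hx)) (sq_nonneg (φ x))]
  have henergy : σmin * (∫ x in a..c, φ x ^ 2) - (∫ x in a..c, r x ^ 2) / σmin ≤ 0 :=
    calc σmin * (∫ x in a..c, φ x ^ 2) - (∫ x in a..c, r x ^ 2) / σmin
        = ∫ x in a..c, (σmin * φ x ^ 2 - r x ^ 2 / σmin) := by
          rw [intervalIntegral.integral_sub, intervalIntegral.integral_const_mul,
            intervalIntegral.integral_div]
          all_goals exact ContinuousOn.intervalIntegrable_of_Icc hac (by fun_prop)
      _ ≤ ∫ x in a..c, -(2 * μ) * (φ x * φ' x) :=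
          integral_mono_on hac
            (ContinuousOn.intervalIntegrable_of_Icc hac (by fun_prop))
            (ContinuousOn.intervalIntegrable_of_Icc hac (by fun_prop)) hpointwise
      _ = -(μ * (φ c ^ 2 - φ a ^ 2)) := by
          rw [intervalIntegral.integral_const_mul,
            integral_mul_deriv_self (uIcc_of_le hac ▸ hφ) (hφ'.intervalIntegrable_of_Icc hac)]
          ring
      _ ≤ 0 := neg_nonpos.2 (inflow_term_nonneg hleft hright)
  rw [inv_pow, inv_mul_eq_div, le_div_iff₀ (by positivity)]
  field_simp at henergy
  linarith

theorem integral_sq_mul_deriv_le_of_transport (hac : a ≤ c) (hσmin : 0 < σmin)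
    (hφ : ContinuousOn φ (Icc a c)) (hφ' : ContinuousOn φ' (Icc a c))
    (hr : ContinuousOn r (Icc a c))
    (htransport : ∀ x ∈ Icc a c, μ * φ' x + σ x * φ x + r x = 0)
    (hσ : ∀ x ∈ Icc a c, σmin ≤ σ x ∧ σ x ≤ σmax) :
    ∫ x in a..c, (μ * φ' x) ^ 2 ≤
      (1 + σmax / σmin) * (∫ x in a..c, r x ^ 2) + σmax * (σmin + σmax) * ∫ x in a..c, φ x ^ 2 := by
  have hσmax : 0 < σmax := hσmin.trans_le ((hσ a ⟨le_rfl, hac⟩).1.trans (hσ a ⟨le_rfl, hac⟩).2)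
  have ht : 0 < σmax / σmin := by positivity
  have hpointwise : ∀ x ∈ Icc a c,
      (μ * φ' x) ^ 2 ≤ (1 + σmax / σmin) * r x ^ 2 + σmax * (σmin + σmax) * φ x ^ 2 := by
    intro x hx
    have hσx := hσ x hx
    have hcoef : σmax * (σmin + σmax) * φ x ^ 2 = (1 + (σmax / σmin)⁻¹) * (σmax ^ 2 * φ x ^ 2) := by
      field_simp
      ring
    calc (μ * φ' x) ^ 2 = (r x + σ x * φ x) ^ 2 := by
          rw [show μ * φ' x = -(r x + σ x * φ x) by linear_combination htransport x hx]
          ring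
      _ ≤ (1 + σmax / σmin) * r x ^ 2 + (1 + (σmax / σmin)⁻¹) * (σ x ^ 2 * φ x ^ 2) := by
          rw [← mul_pow]
          exact add_sq_le_of_pos ht _ _
      _ ≤ (1 + σmax / σmin) * r x ^ 2 + σmax * (σmin + σmax) * φ x ^ 2 := by
          rw [hcoef]
          gcongr <;> linarith
  calc ∫ x in a..c, (μ * φ' x) ^ 2
      ≤ ∫ x in a..c, ((1 + σmax / σmin) * r x ^ 2 + σmax * (σmin + σmax) * φ x ^ 2) :=
        integral_mono_on hac (ContinuousOn.intervalIntegrable_of_Icc hac (by fun_prop))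
          (ContinuousOn.intervalIntegrable_of_Icc hac (by fun_prop)) hpointwise
    _ = _ := by
        rw [intervalIntegral.integral_add, intervalIntegral.integral_const_mul,
          intervalIntegral.integral_const_mul]
        all_goals exact ContinuousOn.intervalIntegrable_of_Icc hac (by fun_prop)

theorem integral_graph_sq_le_of_transport (hac : a ≤ c) (hσmin : 0 < σmin)
    (hφ : ∀ x ∈ Icc a c, HasDerivWithinAt φ (φ' x) (Icc a c) x)
    (hφ' : ContinuousOn φ' (Icc a c)) (hr : ContinuousOn r (Icc a c))
    (hleft : 0 ≤ μ → φ a = 0) (hright : μ ≤ 0 → φ c = 0)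
    (htransport : ∀ x ∈ Icc a c, μ * φ' x + σ x * φ x + r x = 0)
    (hσ : ∀ x ∈ Icc a c, σmin ≤ σ x ∧ σ x ≤ σmax) :
    ∫ x in a..c, (φ x ^ 2 + (μ * φ' x) ^ 2) ≤
      (σmin⁻¹ ^ 2 + (1 + σmax / σmin) ^ 2) * ∫ x in a..c, r x ^ 2 := by
  have hφc : ContinuousOn φ (Icc a c) := fun x hx => (hφ x hx).continuousWithinAt
  have hL2 := integral_sq_le_of_transport hac hσmin hφ hφ' hr hleft hright htransport
    fun x hx => (hσ x hx).1
  have hderiv := integral_sq_mul_deriv_le_of_transport hac hσmin hφc hφ' hr htransport hσ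
  rw [intervalIntegral.integral_add (ContinuousOn.intervalIntegrable_of_Icc hac (by fun_prop))
    (ContinuousOn.intervalIntegrable_of_Icc hac (by fun_prop))]
  calc (∫ x in a..c, φ x ^ 2) + ∫ x in a..c, (μ * φ' x) ^ 2
      ≤ (1 + σmax * (σmin + σmax)) * (∫ x in a..c, φ x ^ 2)
          + (1 + σmax / σmin) * ∫ x in a..c, r x ^ 2 := by linear_combination hderiv
    _ ≤ (1 + σmax * (σmin + σmax)) * (σmin⁻¹ ^ 2 * ∫ x in a..c, r x ^ 2)
          + (1 + σmax / σmin) * ∫ x in a..c, r x ^ 2 := by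
        have hσmax : 0 < σmax :=
          hσmin.trans_le ((hσ a ⟨le_rfl, hac⟩).1.trans (hσ a ⟨le_rfl, hac⟩).2)
        gcongr
    _ = _ := by field_simp; ring

end Transport

theorem transport_residual_error_bound_general
    (b : ℝ) (hb : 0 < b) (Ψ Ψx Ψs Ψsx f : ℝ → ℝ → ℝ) (sigmaT : ℝ → ℝ)
    (σstar σsup : ℝ)
    (hΨ : ContinuousOn (fun p : ℝ × ℝ => Ψ p.1 p.2) (Icc (-b) b ×ˢ Icc (-1) 1))
    (hΨx : ContinuousOn (fun p : ℝ × ℝ => Ψx p.1 p.2) (Icc (-b) b ×ˢ Icc (-1) 1))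
    (hΨsx : ContinuousOn (fun p : ℝ × ℝ => Ψsx p.1 p.2) (Icc (-b) b ×ˢ Icc (-1) 1))
    (hderiv : ∀ μ ∈ Icc (-1 : ℝ) 1, ∀ x ∈ Icc (-b) b,
      HasDerivWithinAt (fun t => Ψ t μ) (Ψx x μ) (Icc (-b) b) x)
    (hderivs : ∀ μ ∈ Icc (-1 : ℝ) 1, ∀ x ∈ Icc (-b) b,
      HasDerivWithinAt (fun t => Ψs t μ) (Ψsx x μ) (Icc (-b) b) x)
    (hin₁ : ∀ μ ∈ Icc (-1 : ℝ) 0, Ψ b μ = Ψs b μ)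
    (hin₂ : ∀ μ ∈ Icc (0 : ℝ) 1, Ψ (-b) μ = Ψs (-b) μ)
    (hsigmaT : ContinuousOn sigmaT (Icc (-b) b))
    (hσstar : 0 < σstar)
    (hbound : ∀ x ∈ Icc (-b) b, σstar ≤ sigmaT x ∧ sigmaT x ≤ σsup)
    (hf : ContinuousOn (fun p : ℝ × ℝ => f p.1 p.2) (Icc (-b) b ×ˢ Icc (-1) 1))
    (heq : ∀ μ ∈ Icc (-1 : ℝ) 1, ∀ x ∈ Icc (-b) b,
      μ * Ψsx x μ + sigmaT x * Ψs x μ = f x μ) :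
    Real.sqrt (∫ μ in (-1 : ℝ)..1, ∫ x in (-b)..b,
        ((Ψs x μ - Ψ x μ) ^ 2 + (μ * (Ψsx x μ - Ψx x μ)) ^ 2))
      ≤ Real.sqrt (σstar⁻¹ ^ 2 + (1 + σsup / σstar) ^ 2)
        * Real.sqrt (∫ μ in (-1 : ℝ)..1, ∫ x in (-b)..b,
            (μ * Ψx x μ + sigmaT x * Ψ x μ - f x μ) ^ 2) := by
  have hbb : -b ≤ b := by linarith
  have hdirection : ∀ μ ∈ Icc (-1 : ℝ) 1,
      ∫ x in (-b)..b, ((Ψs x μ - Ψ x μ) ^ 2 + (μ * (Ψsx x μ - Ψx x μ)) ^ 2) ≤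
        (σstar⁻¹ ^ 2 + (1 + σsup / σstar) ^ 2) *
          ∫ x in (-b)..b, (μ * Ψx x μ + sigmaT x * Ψ x μ - f x μ) ^ 2 := fun μ hμ =>
    integral_graph_sq_le_of_transport hbb hσstar
      (fun x hx => (hderivs μ hμ x hx).sub (hderiv μ hμ x hx))
      ((hΨsx.uncurry_right μ hμ).sub (hΨx.uncurry_right μ hμ))
      (((continuousOn_const.mul (hΨx.uncurry_right μ hμ)).add
        (hsigmaT.mul (hΨ.uncurry_right μ hμ))).sub (hf.uncurry_right μ hμ))
      (fun h => sub_eq_zero.2 (hin₂ μ ⟨h, hμ.2⟩).symm)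
      (fun h => sub_eq_zero.2 (hin₁ μ ⟨hμ.1, h⟩).symm)
      (fun x hx => by linear_combination heq μ hμ x hx) hbound
  have hresidual : ContinuousOn
      (Function.uncurry fun x μ => (μ * Ψx x μ + sigmaT x * Ψ x μ - f x μ) ^ 2)
      ([[-b, b]] ×ˢ Icc (-1) 1) := by
    rw [uIcc_of_le hbb]
    exact (((continuous_snd.continuousOn.mul hΨx).add
      ((hsigmaT.comp continuous_fst.continuousOn fun p hp => hp.1).mul hΨ)).sub hf).pow 2
  have hintegrable := (continuousOn_intervalIntegral_of_continuousOn_prod isCompact_Icc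
    hresidual).intervalIntegrable_of_Icc (μ := volume) (by norm_num)
  have hmono := intervalIntegral.integral_mono_on_of_nonneg (by norm_num)
    (fun μ _ => integral_nonneg hbb fun x _ => by positivity) (hintegrable.const_mul _) hdirection
  rw [intervalIntegral.integral_const_mul] at hmono
  exact (Real.sqrt_le_sqrt hmono).trans_eq (Real.sqrt_mul (by positivity) _)

/-- Residual-based a posteriori error bound in 1D slab geometry: if `Ψ*`
solves `𝒟Ψ* = f` and `Ψ` matches the inflow data of `Ψ*`, then the graph-norm
error of `Ψ` is controlled by the `L²` residual of `Ψ`. -/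
theorem transport_residual_error_bound
    (b : ℝ) (hb : 0 < b) (Ψ Ψx Ψs Ψsx f : ℝ → ℝ → ℝ) (sigmaT : ℝ → ℝ)
    (σstar σsup : ℝ)
    (hΨ : ContinuousOn (fun p : ℝ × ℝ => Ψ p.1 p.2) (Icc (-b) b ×ˢ Icc (-1) 1))
    (hΨs : ContinuousOn (fun p : ℝ × ℝ => Ψs p.1 p.2) (Icc (-b) b ×ˢ Icc (-1) 1))
    (hΨx : ContinuousOn (fun p : ℝ × ℝ => Ψx p.1 p.2) (Icc (-b) b ×ˢ Icc (-1) 1))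
    (hΨsx : ContinuousOn (fun p : ℝ × ℝ => Ψsx p.1 p.2) (Icc (-b) b ×ˢ Icc (-1) 1))
    (hderiv : ∀ μ ∈ Icc (-1 : ℝ) 1, ∀ x ∈ Icc (-b) b,
      HasDerivWithinAt (fun t => Ψ t μ) (Ψx x μ) (Icc (-b) b) x)
    (hderivs : ∀ μ ∈ Icc (-1 : ℝ) 1, ∀ x ∈ Icc (-b) b,
      HasDerivWithinAt (fun t => Ψs t μ) (Ψsx x μ) (Icc (-b) b) x)
    (hin₁ : ∀ μ ∈ Icc (-1 : ℝ) 0, Ψ b μ = Ψs b μ)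
    (hin₂ : ∀ μ ∈ Icc (0 : ℝ) 1, Ψ (-b) μ = Ψs (-b) μ)
    (hsigmaT : ContinuousOn sigmaT (Icc (-b) b))
    (hσstar : 0 < σstar)
    (hbound : ∀ x ∈ Icc (-b) b, σstar ≤ sigmaT x ∧ sigmaT x ≤ σsup)
    (hf : ContinuousOn (fun p : ℝ × ℝ => f p.1 p.2) (Icc (-b) b ×ˢ Icc (-1) 1))
    (heq : ∀ μ ∈ Icc (-1 : ℝ) 1, ∀ x ∈ Icc (-b) b,
      μ * Ψsx x μ + sigmaT x * Ψs x μ = f x μ) :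
    Real.sqrt (∫ μ in (-1 : ℝ)..1, ∫ x in (-b)..b,
        ((Ψs x μ - Ψ x μ) ^ 2 + (μ * (Ψsx x μ - Ψx x μ)) ^ 2))
      ≤ Real.sqrt (σstar⁻¹ ^ 2 + (1 + σsup / σstar) ^ 2)
        * Real.sqrt (∫ μ in (-1 : ℝ)..1, ∫ x in (-b)..b,
            (μ * Ψx x μ + sigmaT x * Ψ x μ - f x μ) ^ 2) :=
  transport_residual_error_bound_general b hb Ψ Ψx Ψs Ψsx f sigmaT σstar σsup hΨ hΨx hΨsx hderiv
    hderivs hin₁ hin₂ hsigmaT hσstar hbound hf heq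
end

section
/- Let b > 0 and let Ψ : ℝ² × ℝ × ℝ → ℝ, written Ψ(x,y,φ,μ), be continuous on [−b,b]² × [0,2π] × [−1,1] with continuous partial derivatives ∂ₓΨ and ∂ᵧΨ there. Suppose Ψ satisfies the vacuum inflow condition on the square: Ψ(−b,y,φ,μ) = 0 whenever cos φ ≥ 0, Ψ(b,y,φ,μ) = 0 whenever cos φ ≤ 0, Ψ(x,−b,φ,μ) = 0 whenever sin φ ≥ 0, and Ψ(x,b,φ,μ) = 0 whenever sin φ ≤ 0, for all admissible values of the remaining variables. Let Σ_t : ℝ² → ℝ be continuous on [−b,b]² with Σ_t(x,y) ≥ σ_* > 0 for all (x,y) ∈ [−b,b]². Then ∫_{−1}^{1} ∫_{0}^{2π} ∫_{−b}^{b} ∫_{−b}^{b} (√(1−μ²)(cos φ · ∂ₓΨ + sin φ · ∂ᵧΨ) + Σ_t Ψ) Ψ dx dy dφ dμ ≥ σ_* ∫_{−1}^{1} ∫_{0}^{2π} ∫_{−b}^{b} ∫_{−b}^{b} Ψ² dx dy dφ dμ. -/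
/-!
For a fixed direction `ω`, the streaming part of `(𝒟Ψ, Ψ)` splits by Fubini into one-dimensional
integrals `ωᵢ ∫ f' f = ωᵢ (f(b)² - f(a)²) / 2`, the outflow minus the inflow of `Ψ²` through a pair
of opposite sides of the square. The vacuum condition kills the inflow term, so the streaming part
is nonnegative and `(𝒟Ψ, Ψ) ≥ ∫ Σ_t Ψ² ≥ σ_* ‖Ψ‖²`. The data are first extended continuously
off the closed box (Tietze), so that every iterated integral is one of a continuous function.
-/

open Set Real MeasureTheory intervalIntegral

theorem ContinuousOn.exists_continuous_eqOn {X : Type*} [TopologicalSpace X] [NormalSpace X]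
    {s : Set X} {f : X → ℝ} (hf : ContinuousOn f s) (hs : IsClosed s) :
    ∃ g : X → ℝ, Continuous g ∧ EqOn g f s := by
  obtain ⟨g, hg⟩ := ContinuousMap.exists_restrict_eq hs ⟨s.domRestrict f, hf.domRestrict⟩
  exact ⟨g, g.continuous, fun x hx => congr($hg ⟨x, hx⟩)⟩

theorem intervalIntegral_intervalIntegral_congr {f g : ℝ → ℝ → ℝ} {a₁ b₁ a₂ b₂ : ℝ} (h₁ : a₁ ≤ b₁)
    (h₂ : a₂ ≤ b₂) (h : ∀ y ∈ Icc a₂ b₂, ∀ x ∈ Icc a₁ b₁, f x y = g x y) :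
    ∫ y in a₂..b₂, ∫ x in a₁..b₁, f x y = ∫ y in a₂..b₂, ∫ x in a₁..b₁, g x y := by
  refine integral_congr fun y hy => integral_congr fun x hx => ?_
  rw [uIcc_of_le h₁] at hx
  rw [uIcc_of_le h₂] at hy
  exact h y hy x hx

theorem intervalIntegral_intervalIntegral_add_of_continuous {f g : ℝ → ℝ → ℝ}
    (hf : Continuous fun p : ℝ × ℝ => f p.1 p.2) (hg : Continuous fun p : ℝ × ℝ => g p.1 p.2)
    (a₁ b₁ a₂ b₂ : ℝ) :
    ∫ y in a₂..b₂, ∫ x in a₁..b₁, (f x y + g x y) =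
      (∫ y in a₂..b₂, ∫ x in a₁..b₁, f x y) + ∫ y in a₂..b₂, ∫ x in a₁..b₁, g x y := by
  have hint : ∀ {h : ℝ → ℝ → ℝ}, (Continuous fun p : ℝ × ℝ => h p.1 p.2) → ∀ y,
      IntervalIntegrable (h · y) volume a₁ b₁ :=
    fun hh y => (hh.comp (by fun_prop : Continuous fun x : ℝ => (x, y))).intervalIntegrable _ _
  simp_rw [integral_add (hint hf _) (hint hg _)]
  exact integral_add ((by fun_prop : Continuous _).intervalIntegrable _ _)
    ((by fun_prop : Continuous _).intervalIntegrable _ _)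

theorem integral_deriv_mul_self_eq {f f' : ℝ → ℝ} {a b : ℝ} (hab : a ≤ b)
    (hf : ∀ x ∈ Icc a b, HasDerivWithinAt f (f' x) (Icc a b) x)
    (hint : IntervalIntegrable (fun x => f' x * f x) volume a b) :
    ∫ x in a..b, f' x * f x = (f b ^ 2 - f a ^ 2) / 2 := by
  have hcont : ContinuousOn f (Icc a b) := fun x hx => (hf x hx).continuousWithinAt
  rw [sub_div]
  refine integral_eq_sub_of_hasDerivAt_of_le hab ((hcont.pow 2).div_const 2) (fun x hx => ?_) hint
  have hx := (hf x (Ioo_subset_Icc_self hx)).hasDerivAt (Icc_mem_nhds hx.1 hx.2)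
  exact ((hx.pow 2).div_const 2).congr_deriv (by ring)

theorem mul_integral_deriv_mul_self_nonneg {f f' : ℝ → ℝ} {a b c : ℝ} (hab : a ≤ b)
    (hf : ∀ x ∈ Icc a b, HasDerivWithinAt f (f' x) (Icc a b) x)
    (hint : IntervalIntegrable (fun x => f' x * f x) volume a b)
    (ha : 0 < c → f a = 0) (hb : c < 0 → f b = 0) :
    0 ≤ c * ∫ x in a..b, f' x * f x := by
  rw [integral_deriv_mul_self_eq hab hf hint]
  rcases lt_trichotomy c 0 with hc | rfl | hc
  · rw [hb hc]; nlinarith [sq_nonneg (f a)]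
  · simp
  · rw [ha hc]; nlinarith [sq_nonneg (f b)]

section Rectangle

variable {a₁ b₁ a₂ b₂ : ℝ} {P Px Py : ℝ → ℝ → ℝ}

/-- The inflow conditions use strict signs: a side parallel to `ω` carries no condition. -/
theorem integral_streaming_mul_self_nonneg (h₁ : a₁ ≤ b₁) (h₂ : a₂ ≤ b₂) (ω₁ ω₂ : ℝ)
    (hP : Continuous fun p : ℝ × ℝ => P p.1 p.2)
    (hPx : Continuous fun p : ℝ × ℝ => Px p.1 p.2)
    (hPy : Continuous fun p : ℝ × ℝ => Py p.1 p.2)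
    (hdx : ∀ y ∈ Icc a₂ b₂, ∀ x ∈ Icc a₁ b₁, HasDerivWithinAt (P · y) (Px x y) (Icc a₁ b₁) x)
    (hdy : ∀ x ∈ Icc a₁ b₁, ∀ y ∈ Icc a₂ b₂, HasDerivWithinAt (P x ·) (Py x y) (Icc a₂ b₂) y)
    (hL : 0 < ω₁ → ∀ y ∈ Icc a₂ b₂, P a₁ y = 0) (hR : ω₁ < 0 → ∀ y ∈ Icc a₂ b₂, P b₁ y = 0)
    (hB : 0 < ω₂ → ∀ x ∈ Icc a₁ b₁, P x a₂ = 0) (hT : ω₂ < 0 → ∀ x ∈ Icc a₁ b₁, P x b₂ = 0) :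
    0 ≤ ∫ y in a₂..b₂, ∫ x in a₁..b₁, (ω₁ * Px x y + ω₂ * Py x y) * P x y := by
  have hx : 0 ≤ ∫ y in a₂..b₂, ω₁ * ∫ x in a₁..b₁, Px x y * P x y :=
    integral_nonneg h₂ fun y hy => mul_integral_deriv_mul_self_nonneg h₁ (hdx y hy)
      ((by fun_prop : Continuous _).intervalIntegrable _ _) (hL · y hy) (hR · y hy)
  have hy : 0 ≤ ∫ x in a₁..b₁, ω₂ * ∫ y in a₂..b₂, Py x y * P x y :=
    integral_nonneg h₁ fun x hx => mul_integral_deriv_mul_self_nonneg h₂ (hdy x hx)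
      ((by fun_prop : Continuous _).intervalIntegrable _ _) (hB · x hx) (hT · x hx)
  have hswap : ∫ y in a₂..b₂, ∫ x in a₁..b₁, ω₂ * (Py x y * P x y) =
      ∫ x in a₁..b₁, ∫ y in a₂..b₂, ω₂ * (Py x y * P x y) :=
    (intervalIntegral_intervalIntegral_swap ((by fun_prop : Continuous _).continuousOn
      |>.integrableOn_compact (isCompact_uIcc.prod isCompact_uIcc)
      |>.mono_set (prod_mono uIoc_subset_uIcc uIoc_subset_uIcc))).symm
  simp_rw [add_mul, mul_assoc]
  rw [intervalIntegral_intervalIntegral_add_of_continuous (by fun_prop) (by fun_prop), hswap]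
  simp_rw [intervalIntegral.integral_const_mul] at hx hy ⊢
  exact add_nonneg hx hy

theorem coercivity_rectangle {S : ℝ → ℝ → ℝ} {σ : ℝ} (h₁ : a₁ ≤ b₁) (h₂ : a₂ ≤ b₂) (ω₁ ω₂ : ℝ)
    (hP : Continuous fun p : ℝ × ℝ => P p.1 p.2)
    (hPx : Continuous fun p : ℝ × ℝ => Px p.1 p.2)
    (hPy : Continuous fun p : ℝ × ℝ => Py p.1 p.2)
    (hS : Continuous fun p : ℝ × ℝ => S p.1 p.2)
    (hdx : ∀ y ∈ Icc a₂ b₂, ∀ x ∈ Icc a₁ b₁, HasDerivWithinAt (P · y) (Px x y) (Icc a₁ b₁) x)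
    (hdy : ∀ x ∈ Icc a₁ b₁, ∀ y ∈ Icc a₂ b₂, HasDerivWithinAt (P x ·) (Py x y) (Icc a₂ b₂) y)
    (hσ : ∀ x ∈ Icc a₁ b₁, ∀ y ∈ Icc a₂ b₂, σ ≤ S x y)
    (hL : 0 < ω₁ → ∀ y ∈ Icc a₂ b₂, P a₁ y = 0) (hR : ω₁ < 0 → ∀ y ∈ Icc a₂ b₂, P b₁ y = 0)
    (hB : 0 < ω₂ → ∀ x ∈ Icc a₁ b₁, P x a₂ = 0) (hT : ω₂ < 0 → ∀ x ∈ Icc a₁ b₁, P x b₂ = 0) :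
    σ * ∫ y in a₂..b₂, ∫ x in a₁..b₁, P x y ^ 2 ≤
      ∫ y in a₂..b₂, ∫ x in a₁..b₁, (ω₁ * Px x y + ω₂ * Py x y + S x y * P x y) * P x y := by
  have hstream := integral_streaming_mul_self_nonneg h₁ h₂ ω₁ ω₂ hP hPx hPy hdx hdy hL hR hB hT
  have habs : σ * ∫ y in a₂..b₂, ∫ x in a₁..b₁, P x y ^ 2 ≤
      ∫ y in a₂..b₂, ∫ x in a₁..b₁, S x y * P x y ^ 2 := by
    simp_rw [← intervalIntegral.integral_const_mul]
    refine integral_mono_on h₂ ((by fun_prop : Continuous _).intervalIntegrable _ _)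
      ((by fun_prop : Continuous _).intervalIntegrable _ _) fun y hy => ?_
    refine integral_mono_on h₁ ((by fun_prop : Continuous _).intervalIntegrable _ _)
      ((by fun_prop : Continuous _).intervalIntegrable _ _) fun x hx => ?_
    exact mul_le_mul_of_nonneg_right (hσ x hx y hy) (sq_nonneg _)
  have hsplit : ∫ y in a₂..b₂, ∫ x in a₁..b₁, (ω₁ * Px x y + ω₂ * Py x y + S x y * P x y) * P x y
      = (∫ y in a₂..b₂, ∫ x in a₁..b₁, (ω₁ * Px x y + ω₂ * Py x y) * P x y) +
        ∫ y in a₂..b₂, ∫ x in a₁..b₁, S x y * P x y ^ 2 := by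
    rw [← intervalIntegral_intervalIntegral_add_of_continuous (by fun_prop) (by fun_prop)]
    exact integral_congr fun y _ => integral_congr fun x _ => by ring
  linarith

end Rectangle

theorem transport_coercivity_square_of_continuous {b σ : ℝ} (hb : -b ≤ b)
    {P Px Py : ℝ → ℝ → ℝ → ℝ → ℝ} {S : ℝ → ℝ → ℝ}
    (hP : Continuous fun p : ℝ × ℝ × ℝ × ℝ => P p.1 p.2.1 p.2.2.1 p.2.2.2)
    (hPx : Continuous fun p : ℝ × ℝ × ℝ × ℝ => Px p.1 p.2.1 p.2.2.1 p.2.2.2)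
    (hPy : Continuous fun p : ℝ × ℝ × ℝ × ℝ => Py p.1 p.2.1 p.2.2.1 p.2.2.2)
    (hS : Continuous fun p : ℝ × ℝ => S p.1 p.2)
    (hdx : ∀ μ ∈ Icc (-1 : ℝ) 1, ∀ φ ∈ Icc (0 : ℝ) (2 * π), ∀ y ∈ Icc (-b) b, ∀ x ∈ Icc (-b) b,
      HasDerivWithinAt (fun t => P t y φ μ) (Px x y φ μ) (Icc (-b) b) x)
    (hdy : ∀ μ ∈ Icc (-1 : ℝ) 1, ∀ φ ∈ Icc (0 : ℝ) (2 * π), ∀ y ∈ Icc (-b) b, ∀ x ∈ Icc (-b) b,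
      HasDerivWithinAt (fun t => P x t φ μ) (Py x y φ μ) (Icc (-b) b) y)
    (hσ : ∀ x ∈ Icc (-b) b, ∀ y ∈ Icc (-b) b, σ ≤ S x y)
    (hL : ∀ y ∈ Icc (-b) b, ∀ φ ∈ Icc (0 : ℝ) (2 * π), ∀ μ ∈ Icc (-1 : ℝ) 1,
      0 ≤ cos φ → P (-b) y φ μ = 0)
    (hR : ∀ y ∈ Icc (-b) b, ∀ φ ∈ Icc (0 : ℝ) (2 * π), ∀ μ ∈ Icc (-1 : ℝ) 1,
      cos φ ≤ 0 → P b y φ μ = 0)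
    (hB : ∀ x ∈ Icc (-b) b, ∀ φ ∈ Icc (0 : ℝ) (2 * π), ∀ μ ∈ Icc (-1 : ℝ) 1,
      0 ≤ sin φ → P x (-b) φ μ = 0)
    (hT : ∀ x ∈ Icc (-b) b, ∀ φ ∈ Icc (0 : ℝ) (2 * π), ∀ μ ∈ Icc (-1 : ℝ) 1,
      sin φ ≤ 0 → P x b φ μ = 0) :
    σ * ∫ μ in (-1 : ℝ)..1, ∫ φ in (0 : ℝ)..(2 * π), ∫ y in (-b)..b,
        ∫ x in (-b)..b, P x y φ μ ^ 2
      ≤ ∫ μ in (-1 : ℝ)..1, ∫ φ in (0 : ℝ)..(2 * π), ∫ y in (-b)..b, ∫ x in (-b)..b,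
          (√(1 - μ ^ 2) * (cos φ * Px x y φ μ + sin φ * Py x y φ μ) + S x y * P x y φ μ)
            * P x y φ μ := by
  rw [← intervalIntegral.integral_const_mul]
  refine integral_mono_on (by norm_num) ((by fun_prop : Continuous _).intervalIntegrable _ _)
    ((by fun_prop : Continuous _).intervalIntegrable _ _) fun μ hμ => ?_
  rw [← intervalIntegral.integral_const_mul]
  refine integral_mono_on two_pi_pos.le ((by fun_prop : Continuous _).intervalIntegrable _ _)
    ((by fun_prop : Continuous _).intervalIntegrable _ _) fun φ hφ => ?_
  have hs : 0 ≤ √(1 - μ ^ 2) := sqrt_nonneg _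
  refine (coercivity_rectangle hb hb (√(1 - μ ^ 2) * cos φ) (√(1 - μ ^ 2) * sin φ)
    (by fun_prop) (by fun_prop) (by fun_prop) hS (hdx μ hμ φ hφ)
    (fun x hx y hy => hdy μ hμ φ hφ y hy x hx) hσ
    (fun h y hy => hL y hy φ hφ μ hμ (pos_of_mul_pos_right h hs).le)
    (fun h y hy => hR y hy φ hφ μ hμ (neg_of_mul_neg_right h hs).le)
    (fun h x hx => hB x hx φ hφ μ hμ (pos_of_mul_pos_right h hs).le)
    (fun h x hx => hT x hx φ hφ μ hμ (neg_of_mul_neg_right h hs).le)).trans_eq ?_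
  exact integral_congr fun y _ => integral_congr fun x _ => by ring

theorem transport_coercivity_square_general
    (b : ℝ) (hb : 0 < b) (Ψ Ψx Ψy : ℝ → ℝ → ℝ → ℝ → ℝ) (sigmaT : ℝ → ℝ → ℝ)
    (σstar : ℝ)
    (hΨ : ContinuousOn (fun p : ℝ × ℝ × ℝ × ℝ => Ψ p.1 p.2.1 p.2.2.1 p.2.2.2)
      (Icc (-b) b ×ˢ Icc (-b) b ×ˢ Icc 0 (2 * π) ×ˢ Icc (-1) 1))
    (hΨx : ContinuousOn (fun p : ℝ × ℝ × ℝ × ℝ => Ψx p.1 p.2.1 p.2.2.1 p.2.2.2)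
      (Icc (-b) b ×ˢ Icc (-b) b ×ˢ Icc 0 (2 * π) ×ˢ Icc (-1) 1))
    (hΨy : ContinuousOn (fun p : ℝ × ℝ × ℝ × ℝ => Ψy p.1 p.2.1 p.2.2.1 p.2.2.2)
      (Icc (-b) b ×ˢ Icc (-b) b ×ˢ Icc 0 (2 * π) ×ˢ Icc (-1) 1))
    (hderivx : ∀ μ ∈ Icc (-1 : ℝ) 1, ∀ φ ∈ Icc (0 : ℝ) (2 * π),
      ∀ y ∈ Icc (-b) b, ∀ x ∈ Icc (-b) b,
      HasDerivWithinAt (fun t => Ψ t y φ μ) (Ψx x y φ μ) (Icc (-b) b) x)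
    (hderivy : ∀ μ ∈ Icc (-1 : ℝ) 1, ∀ φ ∈ Icc (0 : ℝ) (2 * π),
      ∀ y ∈ Icc (-b) b, ∀ x ∈ Icc (-b) b,
      HasDerivWithinAt (fun t => Ψ x t φ μ) (Ψy x y φ μ) (Icc (-b) b) y)
    (hsigmaT : ContinuousOn (fun p : ℝ × ℝ => sigmaT p.1 p.2)
      (Icc (-b) b ×ˢ Icc (-b) b))
    (hlow : ∀ x ∈ Icc (-b) b, ∀ y ∈ Icc (-b) b, σstar ≤ sigmaT x y)
    (hinL : ∀ y ∈ Icc (-b) b, ∀ φ ∈ Icc (0 : ℝ) (2 * π), ∀ μ ∈ Icc (-1 : ℝ) 1,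
      0 ≤ Real.cos φ → Ψ (-b) y φ μ = 0)
    (hinR : ∀ y ∈ Icc (-b) b, ∀ φ ∈ Icc (0 : ℝ) (2 * π), ∀ μ ∈ Icc (-1 : ℝ) 1,
      Real.cos φ ≤ 0 → Ψ b y φ μ = 0)
    (hinB : ∀ x ∈ Icc (-b) b, ∀ φ ∈ Icc (0 : ℝ) (2 * π), ∀ μ ∈ Icc (-1 : ℝ) 1,
      0 ≤ Real.sin φ → Ψ x (-b) φ μ = 0)
    (hinT : ∀ x ∈ Icc (-b) b, ∀ φ ∈ Icc (0 : ℝ) (2 * π), ∀ μ ∈ Icc (-1 : ℝ) 1,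
      Real.sin φ ≤ 0 → Ψ x b φ μ = 0) :
    σstar * ∫ μ in (-1 : ℝ)..1, ∫ φ in (0 : ℝ)..(2 * π), ∫ y in (-b)..b,
        ∫ x in (-b)..b, (Ψ x y φ μ) ^ 2
      ≤ ∫ μ in (-1 : ℝ)..1, ∫ φ in (0 : ℝ)..(2 * π), ∫ y in (-b)..b,
          ∫ x in (-b)..b,
          (Real.sqrt (1 - μ ^ 2)
              * (Real.cos φ * Ψx x y φ μ + Real.sin φ * Ψy x y φ μ)
            + sigmaT x y * Ψ x y φ μ) * Ψ x y φ μ := by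
  have hb' : -b ≤ b := by linarith
  have hbox : IsClosed (Icc (-b) b ×ˢ Icc (-b) b ×ˢ Icc 0 (2 * π) ×ˢ Icc (-1 : ℝ) 1) :=
    isClosed_Icc.prod (isClosed_Icc.prod (isClosed_Icc.prod isClosed_Icc))
  obtain ⟨P, hPc, hP⟩ := hΨ.exists_continuous_eqOn hbox
  obtain ⟨Px, hPxc, hPx⟩ := hΨx.exists_continuous_eqOn hbox
  obtain ⟨Py, hPyc, hPy⟩ := hΨy.exists_continuous_eqOn hbox
  obtain ⟨S, hSc, hS⟩ := hsigmaT.exists_continuous_eqOn (isClosed_Icc.prod isClosed_Icc)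
  have hmem {x y φ μ : ℝ} (hx : x ∈ Icc (-b) b) (hy : y ∈ Icc (-b) b) (hφ : φ ∈ Icc 0 (2 * π))
      (hμ : μ ∈ Icc (-1 : ℝ) 1) :
      (x, y, φ, μ) ∈ Icc (-b) b ×ˢ Icc (-b) b ×ˢ Icc 0 (2 * π) ×ˢ Icc (-1 : ℝ) 1 :=
    ⟨hx, hy, hφ, hμ⟩
  have hmb := left_mem_Icc.2 hb'
  have hpb := right_mem_Icc.2 hb'
  convert transport_coercivity_square_of_continuous hb' (σ := σstar)
    (P := fun x y φ μ => P (x, y, φ, μ)) (Px := fun x y φ μ => Px (x, y, φ, μ))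
    (Py := fun x y φ μ => Py (x, y, φ, μ)) (S := fun x y => S (x, y))
    (by fun_prop) (by fun_prop) (by fun_prop) (by fun_prop)
    (fun μ hμ φ hφ y hy x hx => ((hderivx μ hμ φ hφ y hy x hx).congr_of_mem
      (fun t ht => hP (hmem ht hy hφ hμ)) hx).congr_deriv (hPx (hmem hx hy hφ hμ)).symm)
    (fun μ hμ φ hφ y hy x hx => ((hderivy μ hμ φ hφ y hy x hx).congr_of_mem
      (fun t ht => hP (hmem hx ht hφ hμ)) hy).congr_deriv (hPy (hmem hx hy hφ hμ)).symm)
    (fun x hx y hy => (hS (mk_mem_prod hx hy)).trans_ge (hlow x hx y hy))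
    (fun y hy φ hφ μ hμ h => (hP (hmem hmb hy hφ hμ)).trans (hinL y hy φ hφ μ hμ h))
    (fun y hy φ hφ μ hμ h => (hP (hmem hpb hy hφ hμ)).trans (hinR y hy φ hφ μ hμ h))
    (fun x hx φ hφ μ hμ h => (hP (hmem hx hmb hφ hμ)).trans (hinB x hx φ hφ μ hμ h))
    (fun x hx φ hφ μ hμ h => (hP (hmem hx hpb hφ hμ)).trans (hinT x hx φ hφ μ hμ h)) using 1
  · congr 1
    exact intervalIntegral_intervalIntegral_congr two_pi_pos.le (by norm_num) fun μ hμ φ hφ =>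
      intervalIntegral_intervalIntegral_congr hb' hb' fun y hy x hx => by rw [hP (hmem hx hy hφ hμ)]
  · exact intervalIntegral_intervalIntegral_congr two_pi_pos.le (by norm_num) fun μ hμ φ hφ =>
      intervalIntegral_intervalIntegral_congr hb' hb' fun y hy x hx => by
      rw [hP (hmem hx hy hφ hμ), hPx (hmem hx hy hφ hμ), hPy (hmem hx hy hφ hμ),
        hS (mk_mem_prod hx hy)]

/-- Coercivity of the streaming–absorption operator for 2D square (pin-cell)
geometry with vacuum boundary conditions: `(𝒟Ψ,Ψ) ≥ σ_* ‖Ψ‖₀²`. -/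
theorem transport_coercivity_square
    (b : ℝ) (hb : 0 < b) (Ψ Ψx Ψy : ℝ → ℝ → ℝ → ℝ → ℝ) (sigmaT : ℝ → ℝ → ℝ)
    (σstar : ℝ) (hσstar : 0 < σstar)
    (hΨ : ContinuousOn (fun p : ℝ × ℝ × ℝ × ℝ => Ψ p.1 p.2.1 p.2.2.1 p.2.2.2)
      (Icc (-b) b ×ˢ Icc (-b) b ×ˢ Icc 0 (2 * π) ×ˢ Icc (-1) 1))
    (hΨx : ContinuousOn (fun p : ℝ × ℝ × ℝ × ℝ => Ψx p.1 p.2.1 p.2.2.1 p.2.2.2)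
      (Icc (-b) b ×ˢ Icc (-b) b ×ˢ Icc 0 (2 * π) ×ˢ Icc (-1) 1))
    (hΨy : ContinuousOn (fun p : ℝ × ℝ × ℝ × ℝ => Ψy p.1 p.2.1 p.2.2.1 p.2.2.2)
      (Icc (-b) b ×ˢ Icc (-b) b ×ˢ Icc 0 (2 * π) ×ˢ Icc (-1) 1))
    (hderivx : ∀ μ ∈ Icc (-1 : ℝ) 1, ∀ φ ∈ Icc (0 : ℝ) (2 * π),
      ∀ y ∈ Icc (-b) b, ∀ x ∈ Icc (-b) b,
      HasDerivWithinAt (fun t => Ψ t y φ μ) (Ψx x y φ μ) (Icc (-b) b) x)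
    (hderivy : ∀ μ ∈ Icc (-1 : ℝ) 1, ∀ φ ∈ Icc (0 : ℝ) (2 * π),
      ∀ y ∈ Icc (-b) b, ∀ x ∈ Icc (-b) b,
      HasDerivWithinAt (fun t => Ψ x t φ μ) (Ψy x y φ μ) (Icc (-b) b) y)
    (hsigmaT : ContinuousOn (fun p : ℝ × ℝ => sigmaT p.1 p.2)
      (Icc (-b) b ×ˢ Icc (-b) b))
    (hlow : ∀ x ∈ Icc (-b) b, ∀ y ∈ Icc (-b) b, σstar ≤ sigmaT x y)
    (hinL : ∀ y ∈ Icc (-b) b, ∀ φ ∈ Icc (0 : ℝ) (2 * π), ∀ μ ∈ Icc (-1 : ℝ) 1,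
      0 ≤ Real.cos φ → Ψ (-b) y φ μ = 0)
    (hinR : ∀ y ∈ Icc (-b) b, ∀ φ ∈ Icc (0 : ℝ) (2 * π), ∀ μ ∈ Icc (-1 : ℝ) 1,
      Real.cos φ ≤ 0 → Ψ b y φ μ = 0)
    (hinB : ∀ x ∈ Icc (-b) b, ∀ φ ∈ Icc (0 : ℝ) (2 * π), ∀ μ ∈ Icc (-1 : ℝ) 1,
      0 ≤ Real.sin φ → Ψ x (-b) φ μ = 0)
    (hinT : ∀ x ∈ Icc (-b) b, ∀ φ ∈ Icc (0 : ℝ) (2 * π), ∀ μ ∈ Icc (-1 : ℝ) 1,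
      Real.sin φ ≤ 0 → Ψ x b φ μ = 0) :
    σstar * ∫ μ in (-1 : ℝ)..1, ∫ φ in (0 : ℝ)..(2 * π), ∫ y in (-b)..b,
        ∫ x in (-b)..b, (Ψ x y φ μ) ^ 2
      ≤ ∫ μ in (-1 : ℝ)..1, ∫ φ in (0 : ℝ)..(2 * π), ∫ y in (-b)..b,
          ∫ x in (-b)..b,
          (Real.sqrt (1 - μ ^ 2)
              * (Real.cos φ * Ψx x y φ μ + Real.sin φ * Ψy x y φ μ)
            + sigmaT x y * Ψ x y φ μ) * Ψ x y φ μ :=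
  transport_coercivity_square_general b hb Ψ Ψx Ψy sigmaT σstar hΨ hΨx hΨy hderivx hderivy hsigmaT
    hlow hinL hinR hinB hinT
end
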